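/- For every Wolf space of compact type different from ℍP^n (equivalently, for every Wolf root λ of a compact simple Lie algebra g not isomorphic to sp(n+1)), there exists a long root α with |λ|² = 2⟨α,λ⟩ = |α|², and for nonzero X ∈ L_α, Y ∈ L_{λ−α} the quaternionic bisectional curvature is strictly negative: K_{ℍ,I}(X,Y) = −(κ/(8n(n+2)))·g(X,X)·g(Y,Y) < 0 (with κ > 0). -/

import Mathlib

open RealInnerProductSpace

/-- The standard basis vector `ε_i` of Euclidean space. -/
noncomputable def stdVec {n : ℕ} (i : Fin n) : EuclideanSpace ℝ (Fin n) :=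
  EuclideanSpace.single i (1 : ℝ)

/-- The roots `±ε_μ ± ε_ν` (μ ≠ ν); this is the root system of type `D_n`. -/
noncomputable def rootsDn (n : ℕ) : Set (EuclideanSpace ℝ (Fin n)) :=
  {v | ∃ i j : Fin n, ∃ s t : ℝ, i ≠ j ∧ (s = 1 ∨ s = -1) ∧ (t = 1 ∨ t = -1) ∧
    v = s • stdVec i + t • stdVec j}

/-- The root system of type `A_n` realized in `ℝ^{n+1}`. -/
noncomputable def rootsAn (n : ℕ) : Set (EuclideanSpace ℝ (Fin (n + 1))) :=
  {v | ∃ i j : Fin (n + 1), i ≠ j ∧ v = stdVec i - stdVec j}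

/-- The root system of type `B_n`: `{±ε_μ ± ε_ν} ∪ {±ε_μ}`. -/
noncomputable def rootsBn (n : ℕ) : Set (EuclideanSpace ℝ (Fin n)) :=
  rootsDn n ∪ {v | ∃ i : Fin n, ∃ s : ℝ, (s = 1 ∨ s = -1) ∧ v = s • stdVec i}

/-- The root system of type `C_n`: `{±ε_μ ± ε_ν} ∪ {±2ε_μ}`. -/
noncomputable def rootsCn (n : ℕ) : Set (EuclideanSpace ℝ (Fin n)) :=
  rootsDn n ∪ {v | ∃ i : Fin n, ∃ s : ℝ, (s = 2 ∨ s = -2) ∧ v = s • stdVec i}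

/-- The half-integer roots of `E₈`. -/
def halfRootsE8 : Set (EuclideanSpace ℝ (Fin 8)) :=
  {v | (∀ i, v i = 1/2 ∨ v i = -1/2) ∧ 0 < ∏ i, v i}

/-- The root system of type `E₈`. -/
noncomputable def rootsE8 : Set (EuclideanSpace ℝ (Fin 8)) :=
  rootsDn 8 ∪ halfRootsE8

/-- The root system of type `E₇` inside `E₈`. -/
noncomputable def rootsE7 : Set (EuclideanSpace ℝ (Fin 8)) :=
  {v ∈ rootsE8 | ⟪v, stdVec 6 + stdVec 7⟫ = 0}

/-- The root system of type `E₆` inside `E₇`. -/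
noncomputable def rootsE6 : Set (EuclideanSpace ℝ (Fin 8)) :=
  {v ∈ rootsE7 | ⟪v, stdVec 5 - stdVec 6⟫ = 0}

/-- The root system of type `F₄`. -/
noncomputable def rootsF4 : Set (EuclideanSpace ℝ (Fin 4)) :=
  rootsBn 4 ∪ {v | ∀ i, v i = 1/2 ∨ v i = -1/2}

/-- The root system of type `G₂`. -/
noncomputable def rootsG2 : Set (EuclideanSpace ℝ (Fin 3)) :=
  {v | ∃ i j : Fin 3, i ≠ j ∧ v = stdVec i - stdVec j} ∪
  {v | ∃ i j k : Fin 3, i ≠ j ∧ i ≠ k ∧ j ≠ k ∧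
    (v = (2 : ℝ) • stdVec i - stdVec j - stdVec k ∨
     v = -((2 : ℝ) • stdVec i - stdVec j - stdVec k))}

/-- The types of irreducible root systems; the compact simple Lie algebras
`sp(n+1)` are exactly those of type `C_{n+1}` (with `C_1 = A_1`). -/
inductive RSType : Type
  | A : ℕ → RSType
  | B : ℕ → RSType
  | C : ℕ → RSType
  | D : ℕ → RSType
  | E6 : RSType
  | E7 : RSType
  | E8 : RSType
  | F4 : RSType
  | G2 : RSType

/-- Dimension of the ambient Euclidean space of our realization. -/
def RSType.dim : RSType → ℕ
  | .A n => n + 1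
  | .B n => n
  | .C n => n
  | .D n => n
  | .E6 => 8
  | .E7 => 8
  | .E8 => 8
  | .F4 => 4
  | .G2 => 3

/-- Rank restrictions so that each irreducible root system appears once. -/
def RSType.valid : RSType → Prop
  | .A n => 1 ≤ n
  | .B n => 3 ≤ n
  | .C n => 2 ≤ n
  | .D n => 3 ≤ n
  | _ => True

/-- The set of roots of each type. -/
noncomputable def RSType.roots : (t : RSType) → Set (EuclideanSpace ℝ (Fin t.dim))
  | .A n => rootsAn n
  | .B n => rootsBn n
  | .C n => rootsCn n
  | .D n => rootsDn n
  | .E6 => rootsE6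
  | .E7 => rootsE7
  | .E8 => rootsE8
  | .F4 => rootsF4
  | .G2 => rootsG2

/-- `lam` is a Wolf root, i.e. a maximal root of the root system with respect
to the positive system determined by a linear functional `f` not vanishing on
any root. -/
def IsWolfRoot {m : ℕ} (Δ : Set (EuclideanSpace ℝ (Fin m)))
    (f : EuclideanSpace ℝ (Fin m) →ₗ[ℝ] ℝ) (lam : EuclideanSpace ℝ (Fin m)) :
    Prop :=
  lam ∈ Δ ∧ (∀ α ∈ Δ, f α ≠ 0) ∧ ∀ α ∈ Δ, f α ≤ f lam

/-!
Apart from type `C`, a Wolf root `λ` is a long root, and there is a root `α` of the same length at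
angle `π/3` to it: `|λ|² = 2⟨α,λ⟩ = |α|²`. Then `⟨α, λ - α⟩ / |λ|² = -1/2`, and the curvature
formula gives `-(κ/(8n(n+2))) g(X,X) g(Y,Y) < 0`.

In the coordinate models `α` is explicit: for `λ = ±ε_i ± ε_j` keep one coordinate and move the
other one to a free index (free of `ε₅, ε₆, ε₇` inside `E₆, E₇`); for a half-integral `E₈` root take
the `D₈` root through its first two coordinates; `±(ε₆ - ε₇) ∈ E₇` is paired with a half-integral
root; long `G₂` roots are paired with long `G₂` roots. Short roots of `B`, `F₄`, `G₂` are never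
maximal: each one `λ` has a root `β` with `λ ± β` both roots, and `f (λ ± β) ≤ f λ` forces
`f β = 0`.
-/

/-- `α` has the length of `lam` and makes the angle `π/3` with it. -/
def IsWolfPartner {E : Type*} [NormedAddCommGroup E] [InnerProductSpace ℝ E] (lam α : E) :
    Prop :=
  ⟪lam, lam⟫ = 2 * ⟪α, lam⟫ ∧ 2 * ⟪α, lam⟫ = ⟪α, α⟫

section InnerProductSpace

variable {E : Type*} [NormedAddCommGroup E] [InnerProductSpace ℝ E] {lam α : E}

theorem IsWolfPartner.neg (h : IsWolfPartner lam α) : IsWolfPartner (-lam) (-α) := by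
  simpa only [IsWolfPartner, inner_neg_neg] using h

theorem IsWolfPartner.inner_sub_div_inner_self (h : IsWolfPartner lam α) (hlam : lam ≠ 0) :
    ⟪α, lam - α⟫ / ⟪lam, lam⟫ = -1 / 2 := by
  have hpos : 0 < ⟪lam, lam⟫ := real_inner_self_pos.mpr hlam
  rw [inner_sub_right, div_eq_iff hpos.ne']
  linarith [h.1, h.2]

end InnerProductSpace

theorem quaternionic_bisectional_eq_neg {κ gXX gYY : ℝ} {n : ℕ} (hκ : 0 < κ) (hn : 0 < n)
    (hX : 0 < gXX) (hY : 0 < gYY) :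
    κ / (2 * (n : ℝ) * ((n : ℝ) + 2)) * (-1 / 2 + 1/4) * (gXX * gYY) =
        -(κ / (8 * (n : ℝ) * ((n : ℝ) + 2))) * (gXX * gYY) ∧
      -(κ / (8 * (n : ℝ) * ((n : ℝ) + 2))) * (gXX * gYY) < 0 := by
  have hn' : (0 : ℝ) < n := by exact_mod_cast hn
  refine ⟨by field_simp; ring, ?_⟩
  rw [neg_mul, neg_lt_zero]
  positivity

section Coordinates

variable {m : ℕ}

@[simp]
theorem stdVec_apply (i c : Fin m) : stdVec i c = if c = i then 1 else 0 := by
  simp [stdVec]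

@[simp]
theorem inner_stdVec_left (i : Fin m) (v : EuclideanSpace ℝ (Fin m)) :
    ⟪stdVec i, v⟫ = v i := by
  simp [stdVec, EuclideanSpace.inner_single_left]

@[simp]
theorem inner_stdVec_right (v : EuclideanSpace ℝ (Fin m)) (i : Fin m) :
    ⟪v, stdVec i⟫ = v i := by
  simp [stdVec, EuclideanSpace.inner_single_right]

@[simp]
theorem inner_stdVec_stdVec (i j : Fin m) :
    ⟪stdVec i, stdVec j⟫ = if i = j then 1 else 0 := by
  rw [inner_stdVec_left, stdVec_apply]

theorem exists_ne_ne_notMem (S : Finset (Fin m)) (hS : S.card + 3 ≤ m) (i j : Fin m) :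
    ∃ k, k ≠ i ∧ k ≠ j ∧ k ∉ S := by
  have hcard : (insert i (insert j S)).card < m :=
    calc _ ≤ (insert j S).card + 1 := Finset.card_insert_le _ _
      _ ≤ S.card + 2 := by have := Finset.card_insert_le j S; omega
      _ < m := by omega
  obtain ⟨k, -, hk⟩ := Finset.exists_mem_notMem_of_card_lt_card (t := Finset.univ)
    (s := insert i (insert j S)) (by simpa using hcard)
  simp only [Finset.mem_insert, not_or] at hk
  exact ⟨k, hk⟩

theorem isWolfPartner_smul_add_smul {i j k : Fin m} (hij : i ≠ j) (hki : k ≠ i)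
    (hkj : k ≠ j) {s t u : ℝ} (hs : s = 1 ∨ s = -1) (ht : t = 1 ∨ t = -1) (hu : u = 1 ∨ u = -1) :
    IsWolfPartner (s • stdVec i + t • stdVec j) (s • stdVec i + u • stdVec k) := by
  simp only [IsWolfPartner, inner_add_left, inner_add_right, real_inner_smul_left,
    real_inner_smul_right, inner_stdVec_stdVec, hij, hki, hkj, hij.symm, hki.symm]
  rcases hs with rfl | rfl <;> rcases ht with rfl | rfl <;> rcases hu with rfl | rfl <;> norm_num

theorem isWolfPartner_two_smul_sub_sub {i j k : Fin m} (hij : i ≠ j) (hik : i ≠ k)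
    (hjk : j ≠ k) :
    IsWolfPartner ((2 : ℝ) • stdVec i - stdVec j - stdVec k)
      (-((2 : ℝ) • stdVec j - stdVec i - stdVec k)) := by
  simp only [IsWolfPartner, inner_neg_left, inner_neg_right, inner_sub_left, inner_sub_right,
    real_inner_smul_left, real_inner_smul_right, inner_stdVec_stdVec, hij, hik, hjk, hij.symm,
    hik.symm, hjk.symm]
  norm_num

theorem eq_smul_add_smul_of_mem_rootsDn {v : EuclideanSpace ℝ (Fin m)}
    (hv : v ∈ rootsDn m) {a b : Fin m} (hab : a ≠ b) (ha : v a ≠ 0) (hb : v b ≠ 0) :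
    v = v a • stdVec a + v b • stdVec b ∧ (v a = 1 ∨ v a = -1) := by
  obtain ⟨i, j, s, t, hij, hs, ht, rfl⟩ := hv
  have hsupp : ∀ c, (s • stdVec i + t • stdVec j) c ≠ 0 → c = i ∨ c = j := by
    intro c hc
    by_contra! hc'
    simp [hc'.1, hc'.2] at hc
  rcases hsupp a ha with rfl | rfl <;> rcases hsupp b hb with rfl | rfl
  · exact absurd rfl hab
  · simp [hij, hij.symm, hs]
  · simp [hij, hij.symm, ht, add_comm]
  · exact absurd rfl hab

theorem exists_isWolfPartner_of_mem_rootsDn_of_forall_eq_zero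
    {lam : EuclideanSpace ℝ (Fin m)} (hlam : lam ∈ rootsDn m) {S : Finset (Fin m)}
    (hS : S.card + 3 ≤ m) (hvan : ∀ c ∈ S, lam c = 0) :
    ∃ α ∈ rootsDn m, IsWolfPartner lam α ∧ ∀ c ∈ S, α c = 0 := by
  obtain ⟨i, j, s, t, hij, hs, ht, rfl⟩ := hlam
  obtain ⟨k, hki, hkj, hkS⟩ := exists_ne_ne_notMem S hS i j
  have hiS : i ∉ S := fun hi => by
    have hs0 : s = 0 := by simpa [hij] using hvan i hi
    rcases hs with rfl | rfl <;> norm_num at hs0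
  refine ⟨s • stdVec i + (1 : ℝ) • stdVec k, ⟨i, k, s, 1, hki.symm, hs, Or.inl rfl, rfl⟩,
    isWolfPartner_smul_add_smul hij hki hkj hs ht (Or.inl rfl), fun c hc => ?_⟩
  simp [ne_of_mem_of_not_mem hc hiS, ne_of_mem_of_not_mem hc hkS]

theorem exists_isWolfPartner_of_mem_rootsDn (hm : 3 ≤ m)
    {lam : EuclideanSpace ℝ (Fin m)} (hlam : lam ∈ rootsDn m) :
    ∃ α ∈ rootsDn m, IsWolfPartner lam α := by
  obtain ⟨α, hα, hpartner, -⟩ :=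
    exists_isWolfPartner_of_mem_rootsDn_of_forall_eq_zero hlam (S := ∅) (by simpa) (by simp)
  exact ⟨α, hα, hpartner⟩

section IsWolfRoot

variable {Δ : Set (EuclideanSpace ℝ (Fin m))} {f : EuclideanSpace ℝ (Fin m) →ₗ[ℝ] ℝ}
  {lam : EuclideanSpace ℝ (Fin m)}

theorem IsWolfRoot.ne_zero (h : IsWolfRoot Δ f lam) : lam ≠ 0 := by
  rintro rfl
  exact h.2.1 0 h.1 (map_zero f)

theorem IsWolfRoot.sub_notMem_of_add_mem {β : EuclideanSpace ℝ (Fin m)}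
    (h : IsWolfRoot Δ f lam) (hβ : β ∈ Δ) (hadd : lam + β ∈ Δ) : lam - β ∉ Δ := by
  intro hsub
  have hle_add := h.2.2 _ hadd
  have hle_sub := h.2.2 _ hsub
  rw [map_add] at hle_add
  rw [map_sub] at hle_sub
  exact h.2.1 β hβ (by linarith)

theorem IsWolfRoot.ne_smul_stdVec (h : IsWolfRoot Δ f lam) (hB : rootsBn m ⊆ Δ) (hm : 2 ≤ m)
    (i : Fin m) {s : ℝ} (hs : s = 1 ∨ s = -1) : lam ≠ s • stdVec i := by
  rintro rfl
  have : Nontrivial (Fin m) := Fin.nontrivial_iff_two_le.mpr hm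
  obtain ⟨k, hki⟩ := exists_ne i
  refine h.sub_notMem_of_add_mem (β := stdVec k) (hB (Or.inr ⟨k, 1, Or.inl rfl, by simp⟩))
    (hB (Or.inl ⟨i, k, s, 1, hki.symm, hs, Or.inl rfl, by simp⟩))
    (hB (Or.inl ⟨i, k, s, -1, hki.symm, hs, Or.inr rfl, by simp [sub_eq_add_neg]⟩))

end IsWolfRoot

end Coordinates

theorem exists_isWolfPartner_rootsAn {n : ℕ} (hn : 2 ≤ n)
    {lam : EuclideanSpace ℝ (Fin (n + 1))} (hlam : lam ∈ rootsAn n) :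
    ∃ α ∈ rootsAn n, IsWolfPartner lam α := by
  obtain ⟨i, j, hij, rfl⟩ := hlam
  obtain ⟨k, hki, hkj, -⟩ := exists_ne_ne_notMem ∅ (by simpa) i j
  refine ⟨stdVec i - stdVec k, ⟨i, k, hki.symm, rfl⟩, ?_⟩
  simpa only [one_smul, neg_one_smul, ← sub_eq_add_neg] using
    isWolfPartner_smul_add_smul hij hki hkj (s := 1) (t := -1) (u := -1)
      (by norm_num) (by norm_num) (by norm_num)

theorem exists_isWolfPartner_rootsBn {n : ℕ} (hn : 3 ≤ n)
    {f : EuclideanSpace ℝ (Fin n) →ₗ[ℝ] ℝ} {lam : EuclideanSpace ℝ (Fin n)}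
    (hlam : IsWolfRoot (rootsBn n) f lam) : ∃ α ∈ rootsBn n, IsWolfPartner lam α := by
  rcases hlam.1 with hD | ⟨i, s, hs, rfl⟩
  · obtain ⟨α, hα, hpartner⟩ := exists_isWolfPartner_of_mem_rootsDn hn hD
    exact ⟨α, Or.inl hα, hpartner⟩
  · exact absurd rfl (hlam.ne_smul_stdVec subset_rfl (by omega) i hs)

theorem inner_self_eq_two_of_forall_eq_half {v : EuclideanSpace ℝ (Fin 8)}
    (hv : ∀ c, v c = 1/2 ∨ v c = -1/2) : ⟪v, v⟫ = 2 := by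
  have hsq : ∀ c, v c * v c = 1 / 4 := fun c => by
    rcases hv c with h | h <;> rw [h] <;> norm_num
  simp only [PiLp.inner_apply, RCLike.inner_apply, conj_trivial, Fin.sum_univ_eight, hsq]
  norm_num

theorem exists_isWolfPartner_of_mem_halfRootsE8 {lam : EuclideanSpace ℝ (Fin 8)}
    (hlam : lam ∈ halfRootsE8) :
    ∃ α ∈ rootsDn 8, IsWolfPartner lam α ∧ ∀ c : Fin 8, 2 ≤ c → α c = 0 := by
  have hsq : ∀ c, lam c * lam c = 1 / 4 := fun c => by
    rcases hlam.1 c with h | h <;> rw [h] <;> norm_num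
  have hcoeff : ∀ c, 2 * lam c = 1 ∨ 2 * lam c = -1 := fun c => by
    rcases hlam.1 c with h | h <;> rw [h] <;> norm_num
  refine ⟨(2 * lam 0) • stdVec 0 + (2 * lam 1) • stdVec 1,
    ⟨0, 1, _, _, by decide, hcoeff 0, hcoeff 1, rfl⟩, ?_, fun c hc => ?_⟩
  · simp only [IsWolfPartner, inner_self_eq_two_of_forall_eq_half hlam.1, inner_add_left,
      inner_add_right, real_inner_smul_left, real_inner_smul_right, inner_stdVec_left,
      inner_stdVec_right, stdVec_apply, Fin.isValue, ↓reduceIte, Fin.reduceEq]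
    constructor <;> linarith [hsq 0, hsq 1]
  · have h0 : c ≠ 0 := by rintro rfl; exact absurd hc (by decide)
    have h1 : c ≠ 1 := by rintro rfl; exact absurd hc (by decide)
    simp [h0, h1]

theorem mem_rootsE7_of_mem_rootsDn {α : EuclideanSpace ℝ (Fin 8)} (hα : α ∈ rootsDn 8)
    (h6 : α 6 = 0) (h7 : α 7 = 0) : α ∈ rootsE7 :=
  ⟨Or.inl hα, by simp [inner_add_right, h6, h7]⟩

theorem mem_rootsE6_of_mem_rootsDn {α : EuclideanSpace ℝ (Fin 8)} (hα : α ∈ rootsDn 8)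
    (h5 : α 5 = 0) (h6 : α 6 = 0) (h7 : α 7 = 0) : α ∈ rootsE6 :=
  ⟨mem_rootsE7_of_mem_rootsDn hα h6 h7, by simp [inner_sub_right, h5, h6]⟩

theorem exists_isWolfPartner_rootsE8 {lam : EuclideanSpace ℝ (Fin 8)} (hlam : lam ∈ rootsE8) :
    ∃ α ∈ rootsE8, IsWolfPartner lam α := by
  rcases hlam with hD | hhalf
  · obtain ⟨α, hα, hpartner⟩ := exists_isWolfPartner_of_mem_rootsDn (by norm_num) hD
    exact ⟨α, Or.inl hα, hpartner⟩
  · obtain ⟨α, hα, hpartner, -⟩ := exists_isWolfPartner_of_mem_halfRootsE8 hhalf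
    exact ⟨α, Or.inl hα, hpartner⟩

theorem exists_isWolfPartner_rootsE7_smul_add_neg_smul {σ : ℝ} (hσ : σ = 1 ∨ σ = -1) :
    ∃ α ∈ rootsE7, IsWolfPartner (σ • stdVec 6 + (-σ) • stdVec 7) α := by
  have hσσ : σ * σ = 1 := by rcases hσ with rfl | rfl <;> norm_num
  set α : EuclideanSpace ℝ (Fin 8) := !₂[-1/2, 1/2, 1/2, 1/2, 1/2, 1/2, σ/2, -σ/2]
  have hhalf : ∀ c, α c = 1/2 ∨ α c = -1/2 := fun c => by
    fin_cases c <;> simp [α] <;> rcases hσ with rfl | rfl <;> norm_num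
  refine ⟨α, ⟨Or.inr ⟨hhalf, ?_⟩, ?_⟩, ?_⟩
  · simp only [one_div, Fin.prod_univ_eight, Fin.isValue, Matrix.cons_val_zero,
      Matrix.cons_val_one, Matrix.cons_val, α]
    nlinarith
  · simp only [one_div, Fin.isValue, inner_add_right, inner_stdVec_right, Matrix.cons_val, α]
    ring
  · simp only [IsWolfPartner, inner_self_eq_two_of_forall_eq_half hhalf, inner_add_left,
      inner_add_right, real_inner_smul_left, real_inner_smul_right, inner_stdVec_right]
    simp only [Fin.isValue, stdVec_apply, ↓reduceIte, Fin.reduceEq, Matrix.cons_val, α]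
    constructor <;> nlinarith

theorem exists_isWolfPartner_rootsE7 {lam : EuclideanSpace ℝ (Fin 8)} (hlam : lam ∈ rootsE7) :
    ∃ α ∈ rootsE7, IsWolfPartner lam α := by
  obtain ⟨hD | hhalf, horth⟩ := hlam
  all_goals simp only [inner_add_right, inner_stdVec_right] at horth
  · by_cases h7 : lam 7 = 0
    · have hvan : ∀ c ∈ ({6, 7} : Finset (Fin 8)), lam c = 0 := by
        simp only [Finset.mem_insert, Finset.mem_singleton, forall_eq_or_imp, forall_eq]
        exact ⟨by linarith, h7⟩
      obtain ⟨α, hα, hpartner, hαvan⟩ :=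
        exists_isWolfPartner_of_mem_rootsDn_of_forall_eq_zero hD (by simp) hvan
      exact ⟨α, mem_rootsE7_of_mem_rootsDn hα (hαvan 6 (by simp)) (hαvan 7 (by simp)),
        hpartner⟩
    · obtain ⟨heq, hσ⟩ := eq_smul_add_smul_of_mem_rootsDn hD (by decide : (6 : Fin 8) ≠ 7)
        (fun h6 => h7 (by linarith)) h7
      rw [heq, show lam 7 = -lam 6 by linarith]
      exact exists_isWolfPartner_rootsE7_smul_add_neg_smul hσ
  · obtain ⟨α, hα, hpartner, hαvan⟩ := exists_isWolfPartner_of_mem_halfRootsE8 hhalf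
    exact ⟨α, mem_rootsE7_of_mem_rootsDn hα (hαvan 6 (by decide)) (hαvan 7 (by decide)),
      hpartner⟩

theorem exists_isWolfPartner_rootsE6 {lam : EuclideanSpace ℝ (Fin 8)} (hlam : lam ∈ rootsE6) :
    ∃ α ∈ rootsE6, IsWolfPartner lam α := by
  obtain ⟨⟨hD | hhalf, h67⟩, h56⟩ := hlam
  all_goals simp only [inner_add_right, inner_sub_right, inner_stdVec_right] at h67 h56
  · have h7 : lam 7 = 0 := by
      by_contra h7
      obtain ⟨heq, -⟩ := eq_smul_add_smul_of_mem_rootsDn hD (by decide : (6 : Fin 8) ≠ 7)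
        (fun h6 => h7 (by linarith)) h7
      have h5 : lam 5 = 0 := by rw [heq]; simp
      exact h7 (by linarith)
    have hvan : ∀ c ∈ ({5, 6, 7} : Finset (Fin 8)), lam c = 0 := by
      simp only [Finset.mem_insert, Finset.mem_singleton, forall_eq_or_imp, forall_eq]
      exact ⟨by linarith, by linarith, h7⟩
    obtain ⟨α, hα, hpartner, hαvan⟩ :=
      exists_isWolfPartner_of_mem_rootsDn_of_forall_eq_zero hD (by simp) hvan
    exact ⟨α, mem_rootsE6_of_mem_rootsDn hα (hαvan 5 (by simp)) (hαvan 6 (by simp))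
      (hαvan 7 (by simp)), hpartner⟩
  · obtain ⟨α, hα, hpartner, hαvan⟩ := exists_isWolfPartner_of_mem_halfRootsE8 hhalf
    exact ⟨α, mem_rootsE6_of_mem_rootsDn hα (hαvan 5 (by decide)) (hαvan 6 (by decide))
      (hαvan 7 (by decide)), hpartner⟩

theorem not_isWolfRoot_rootsF4_of_forall_eq_half {f : EuclideanSpace ℝ (Fin 4) →ₗ[ℝ] ℝ}
    {lam : EuclideanSpace ℝ (Fin 4)} (hlam : ∀ c, lam c = 1/2 ∨ lam c = -1/2) :
    ¬ IsWolfRoot rootsF4 f lam := by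
  intro h
  have hcoeff : ∀ c, 2 * lam c = 1 ∨ 2 * lam c = -1 := fun c => by
    rcases hlam c with h | h <;> rw [h] <;> norm_num
  refine h.sub_notMem_of_add_mem (β := !₂[lam 0, lam 1, -lam 2, -lam 3])
    (Or.inr fun c => ?_)
    (Or.inl (Or.inl ⟨0, 1, _, _, by decide, hcoeff 0, hcoeff 1, ?_⟩))
    (Or.inl (Or.inl ⟨2, 3, _, _, by decide, hcoeff 2, hcoeff 3, ?_⟩))
  · have := hlam c
    fin_cases c <;>
      simp only [Fin.zero_eta, Fin.mk_one, Fin.reduceFinMk, Fin.isValue, one_div,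
        Matrix.cons_val_zero, Matrix.cons_val_one, Matrix.cons_val] at this ⊢ <;> grind
  all_goals ext c; fin_cases c <;> simp <;> ring

theorem exists_isWolfPartner_rootsF4 {f : EuclideanSpace ℝ (Fin 4) →ₗ[ℝ] ℝ}
    {lam : EuclideanSpace ℝ (Fin 4)} (hlam : IsWolfRoot rootsF4 f lam) :
    ∃ α ∈ rootsF4, IsWolfPartner lam α := by
  rcases hlam.1 with (hD | ⟨i, s, hs, rfl⟩) | hhalf
  · obtain ⟨α, hα, hpartner⟩ := exists_isWolfPartner_of_mem_rootsDn (by norm_num) hD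
    exact ⟨α, Or.inl (Or.inl hα), hpartner⟩
  · exact absurd rfl (hlam.ne_smul_stdVec Set.subset_union_left (by norm_num) i hs)
  · exact absurd hlam (not_isWolfRoot_rootsF4_of_forall_eq_half hhalf)

theorem not_isWolfRoot_rootsG2_stdVec_sub {f : EuclideanSpace ℝ (Fin 3) →ₗ[ℝ] ℝ}
    {i j : Fin 3} (hij : i ≠ j) : ¬ IsWolfRoot rootsG2 f (stdVec i - stdVec j) := by
  intro h
  obtain ⟨k, hki, hkj, -⟩ := exists_ne_ne_notMem ∅ (by simp) i j
  refine h.sub_notMem_of_add_mem (β := stdVec k - stdVec j) (Or.inl ⟨k, j, hkj, rfl⟩)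
    (Or.inr ⟨j, i, k, hij.symm, hkj.symm, hki.symm, Or.inr ?_⟩) (Or.inl ⟨i, k, hki.symm, ?_⟩)
  · module
  · abel

theorem exists_isWolfPartner_rootsG2 {f : EuclideanSpace ℝ (Fin 3) →ₗ[ℝ] ℝ}
    {lam : EuclideanSpace ℝ (Fin 3)} (hlam : IsWolfRoot rootsG2 f lam) :
    ∃ α ∈ rootsG2, IsWolfPartner lam α := by
  rcases hlam.1 with ⟨i, j, hij, rfl⟩ | ⟨i, j, k, hij, hik, hjk, rfl | rfl⟩
  · exact absurd hlam (not_isWolfRoot_rootsG2_stdVec_sub hij)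
  · exact ⟨_, Or.inr ⟨j, i, k, hij.symm, hjk, hik, Or.inr rfl⟩,
      isWolfPartner_two_smul_sub_sub hij hik hjk⟩
  · refine ⟨_, Or.inr ⟨j, i, k, hij.symm, hjk, hik, Or.inl rfl⟩, ?_⟩
    simpa only [neg_neg] using (isWolfPartner_two_smul_sub_sub hij hik hjk).neg

theorem exists_isWolfPartner {t : RSType} (hval : t.valid) (hA1 : t ≠ .A 1)
    (hC : ∀ m, t ≠ .C m) {f : EuclideanSpace ℝ (Fin t.dim) →ₗ[ℝ] ℝ}
    {lam : EuclideanSpace ℝ (Fin t.dim)} (hlam : IsWolfRoot t.roots f lam) :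
    ∃ α ∈ t.roots, IsWolfPartner lam α := by
  cases t with
  | A n =>
    have hn : n ≠ 1 := fun h => hA1 (h ▸ rfl)
    exact exists_isWolfPartner_rootsAn (by unfold RSType.valid at hval; omega) hlam.1
  | B n => exact exists_isWolfPartner_rootsBn hval hlam
  | C n => exact absurd rfl (hC n)
  | D n => exact exists_isWolfPartner_of_mem_rootsDn hval hlam.1
  | E6 => exact exists_isWolfPartner_rootsE6 hlam.1
  | E7 => exact exists_isWolfPartner_rootsE7 hlam.1
  | E8 => exact exists_isWolfPartner_rootsE8 hlam.1
  | F4 => exact exists_isWolfPartner_rootsF4 hlam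
  | G2 => exact exists_isWolfPartner_rootsG2 hlam

/-- Negative quaternionic bisectional curvature on Wolf spaces other than
`ℍP^n`.  For every Wolf root `λ` of a compact simple Lie algebra `g` not
isomorphic to `sp(n+1)` (i.e. of type different from `A₁` and `C_n`), there
exists a long root `α` with `|λ|² = 2⟨α,λ⟩ = |α|²`.  Consequently, by the
formula `K_{ℍ,I}(X,Y) = (κ/(2n(n+2)))(⟨α,λ−α⟩/⟨λ,λ⟩ + 1/4)·g(X,X)·g(Y,Y)`
for nonzero `X ∈ L_α`, `Y ∈ L_{λ−α}`, the quaternionic bisectional curvature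
equals `−(κ/(8n(n+2)))·g(X,X)·g(Y,Y) < 0` whenever `κ > 0`. -/
theorem wolf_space_negative_bisectional (t : RSType) (hval : t.valid)
    (hA1 : t ≠ .A 1) (hC : ∀ m, t ≠ .C m)
    (f : EuclideanSpace ℝ (Fin t.dim) →ₗ[ℝ] ℝ)
    (lam : EuclideanSpace ℝ (Fin t.dim)) (hlam : IsWolfRoot t.roots f lam) :
    ∃ α ∈ t.roots,
      ⟪lam, lam⟫ = 2 * ⟪α, lam⟫ ∧ 2 * ⟪α, lam⟫ = ⟪α, α⟫ ∧
      ∀ κ gXX gYY : ℝ, ∀ n : ℕ, 0 < κ → 0 < n → 0 < gXX → 0 < gYY →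
        κ / (2 * (n : ℝ) * ((n : ℝ) + 2)) *
            (⟪α, lam - α⟫ / ⟪lam, lam⟫ + 1/4) * (gXX * gYY) =
          -(κ / (8 * (n : ℝ) * ((n : ℝ) + 2))) * (gXX * gYY) ∧
        -(κ / (8 * (n : ℝ) * ((n : ℝ) + 2))) * (gXX * gYY) < 0 := by
  obtain ⟨α, hα, hpartner⟩ := exists_isWolfPartner hval hA1 hC hlam
  refine ⟨α, hα, hpartner.1, hpartner.2, fun κ gXX gYY n hκ hn hX hY => ?_⟩
  rw [hpartner.inner_sub_div_inner_self hlam.ne_zero]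
  exact quaternionic_bisectional_eq_neg hκ hn hX hY
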